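/- Let L be a finite lattice and g a closure operator on L². Then g·g^{ω+*} = g^{ω+*} and g*g^ω g = g*g^ω; consequently g^{ω+*}g^ω g = g^{ω+*}g^ω = g·g^{ω+*}g^ω. -/

import Mathlib

/-- Relational composition of binary relations on `α`. -/
def relComp {α : Type*} (f g : Set (α × α)) : Set (α × α) :=
  {p | ∃ z, (p.1, z) ∈ f ∧ (z, p.2) ∈ g}

/-- Powers of a binary relation, the diagonal being the zeroth power. -/
def relPow {α : Type*} (g : Set (α × α)) : ℕ → Set (α × α)
  | 0 => {p | p.1 = p.2}
  | n + 1 => relComp (relPow g n) g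

/-- Kleene star: the partial identity on the fixed-point set of the relation. -/
def relStar {α : Type*} (g : Set (α × α)) : Set (α × α) :=
  {p | p.1 = p.2 ∧ p ∈ g}

/-- A binary relation on a complete lattice is meet-closed if closed under
arbitrary coordinatewise meets. -/
def MeetClosedRel {α : Type*} [CompleteLattice α] (f : Set (α × α)) : Prop :=
  ∀ S : Set (α × α), S ⊆ f → sInf S ∈ f

/-!
Write `p = g^n` and `s = g*`. Every fixed point of `g` is a loop of `g`, so `s ⊆ g^k ∘ s` and
`s ⊆ s ∘ g^k` for every `k`. Hence an extra factor `g` next to `p s` (or `s p`) can be padded by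
`g^(n-1)` to a second copy of `p`, which idempotency absorbs; conversely `p s ⊆ p g s = g p s`.
The last two identities follow from the first two by associativity.
-/

open SetRel

section RelationPowers

variable {α : Type*} (g : SetRel α α)

lemma relComp_eq_comp (f : SetRel α α) : relComp f g = f ○ g := rfl

lemma relPow_succ (n : ℕ) : relPow g (n + 1) = relPow g n ○ g := rfl

lemma relPow_one : relPow g 1 = g := id_comp g

lemma relPow_add (a b : ℕ) : relPow g (a + b) = relPow g a ○ relPow g b := by
  induction b with
  | zero => exact (comp_id _).symm
  | succ b ih => rw [← add_assoc, relPow_succ, relPow_succ, ih, comp_assoc]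

lemma relPow_succ' (n : ℕ) : relPow g (n + 1) = g ○ relPow g n := by
  rw [add_comm, relPow_add, relPow_one]

lemma comp_relPow_comm (n : ℕ) : g ○ relPow g n = relPow g n ○ g := by
  rw [← relPow_succ', relPow_succ]

lemma relStar_subset_relPow (k : ℕ) : relStar g ⊆ relPow g k := by
  rintro ⟨x, y⟩ ⟨rfl : x = y, hx⟩
  induction k with
  | zero => rfl
  | succ k ih => exact ⟨x, ih, hx⟩

lemma relStar_comp_relStar : relStar g ○ relStar g = relStar g := by
  ext ⟨x, y⟩
  constructor
  · rintro ⟨z, ⟨rfl : x = z, -⟩, rfl : x = y, hx⟩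
    exact ⟨rfl, hx⟩
  · rintro ⟨rfl : x = y, hx⟩
    exact ⟨x, ⟨rfl, hx⟩, rfl, hx⟩

lemma relStar_subset_relPow_comp (k : ℕ) : relStar g ⊆ relPow g k ○ relStar g := by
  conv_lhs => rw [← relStar_comp_relStar]
  gcongr
  exact relStar_subset_relPow g k

lemma relStar_subset_comp_relPow (k : ℕ) : relStar g ⊆ relStar g ○ relPow g k := by
  conv_lhs => rw [← relStar_comp_relStar]
  gcongr
  exact relStar_subset_relPow g k

variable {g} {n : ℕ} (hn : 0 < n) (hidem : relPow g n ○ relPow g n = relPow g n)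
include hn hidem

lemma comp_relPow_comp_relStar : g ○ (relPow g n ○ relStar g) = relPow g n ○ relStar g := by
  obtain ⟨m, rfl⟩ := Nat.exists_eq_add_one_of_ne_zero hn.ne'
  apply subset_antisymm
  · calc g ○ (relPow g (m + 1) ○ relStar g)
        ⊆ g ○ (relPow g (m + 1) ○ (relPow g m ○ relStar g)) := by
          gcongr; exact relStar_subset_relPow_comp g m
      _ = relPow g (m + 1) ○ relPow g (m + 1) ○ relStar g := by
          rw [← comp_assoc, comp_relPow_comm, comp_assoc, ← comp_assoc g, ← relPow_succ',
            comp_assoc]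
      _ = relPow g (m + 1) ○ relStar g := by rw [hidem]
  · calc relPow g (m + 1) ○ relStar g
        ⊆ relPow g (m + 1) ○ (relPow g 1 ○ relStar g) := by
          gcongr; exact relStar_subset_relPow_comp g 1
      _ = g ○ (relPow g (m + 1) ○ relStar g) := by
          rw [relPow_one, ← comp_assoc, ← comp_relPow_comm, comp_assoc]

lemma relStar_comp_relPow_comp : relStar g ○ relPow g n ○ g = relStar g ○ relPow g n := by
  obtain ⟨m, rfl⟩ := Nat.exists_eq_add_one_of_ne_zero hn.ne'
  apply subset_antisymm
  · calc relStar g ○ relPow g (m + 1) ○ g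
        ⊆ relStar g ○ relPow g m ○ relPow g (m + 1) ○ g := by
          gcongr; exact relStar_subset_comp_relPow g m
      _ = relStar g ○ (relPow g (m + 1) ○ relPow g (m + 1)) := by
          rw [comp_assoc _ _ g, ← comp_relPow_comm, comp_assoc, ← comp_assoc _ g, ← relPow_succ]
      _ = relStar g ○ relPow g (m + 1) := by rw [hidem]
  · calc relStar g ○ relPow g (m + 1)
        ⊆ relStar g ○ relPow g 1 ○ relPow g (m + 1) := by
          gcongr; exact relStar_subset_comp_relPow g 1
      _ = relStar g ○ relPow g (m + 1) ○ g := by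
          rw [relPow_one, comp_assoc, comp_relPow_comm, comp_assoc]

end RelationPowers

theorem omega_star_absorption_general (α : Type*)
    (g : Set (α × α))
    (n : ℕ) (hn : 0 < n) (hidem : relComp (relPow g n) (relPow g n) = relPow g n) :
    relComp g (relComp (relPow g n) (relStar g)) = relComp (relPow g n) (relStar g) ∧
    relComp (relComp (relStar g) (relPow g n)) g = relComp (relStar g) (relPow g n) ∧
    relComp (relComp (relComp (relPow g n) (relStar g)) (relPow g n)) g =
      relComp (relComp (relPow g n) (relStar g)) (relPow g n) ∧
    relComp g (relComp (relComp (relPow g n) (relStar g)) (relPow g n)) =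
      relComp (relComp (relPow g n) (relStar g)) (relPow g n) := by
  simp only [relComp_eq_comp] at hidem ⊢
  have left := comp_relPow_comp_relStar hn hidem
  have right := relStar_comp_relPow_comp hn hidem
  refine ⟨left, right, ?_, ?_⟩
  · rw [comp_assoc _ (relStar g), comp_assoc, right]
  · rw [← comp_assoc, left]

/-- Let `L` be a finite lattice and `g` a closure operator on `L²` (given by its
meet-closed relation), with `g^ω = g^n` the idempotent power and
`g^{ω+*} = g^ω g*`.  Then `g · g^{ω+*} = g^{ω+*}` and `g* g^ω g = g* g^ω`;
consequently `g^{ω+*} g^ω g = g^{ω+*} g^ω = g · g^{ω+*} g^ω`. -/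
theorem omega_star_absorption (α : Type*) [CompleteLattice α] [Fintype α]
    (g : Set (α × α)) (hg : MeetClosedRel g)
    (n : ℕ) (hn : 0 < n) (hidem : relComp (relPow g n) (relPow g n) = relPow g n) :
    relComp g (relComp (relPow g n) (relStar g)) = relComp (relPow g n) (relStar g) ∧
    relComp (relComp (relStar g) (relPow g n)) g = relComp (relStar g) (relPow g n) ∧
    relComp (relComp (relComp (relPow g n) (relStar g)) (relPow g n)) g =
      relComp (relComp (relPow g n) (relStar g)) (relPow g n) ∧
    relComp g (relComp (relComp (relPow g n) (relStar g)) (relPow g n)) =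
      relComp (relComp (relPow g n) (relStar g)) (relPow g n) :=
  omega_star_absorption_general α g n hn hidem
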